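/- For every q with 0 ≤ q < σ_max(F_{0:N})^{−2}, the matrices S₀,…,S_N produced by the Riccati recursion are all positive definite and det(I_{m(N+1)} − q·F_{0:N}ᵀF_{0:N}) = ∏_{k=0}^{N} det S_k. -/

import Mathlib

open MeasureTheory Real Matrix

/-- State transition matrix `Φ_{j,k} = A_{j−1}···A_k` (with `Φ_{k,k} = I`). -/
noncomputable def Phi {n : ℕ} (A : ℕ → Matrix (Fin n) (Fin n) ℝ) : ℕ → ℕ → Matrix (Fin n) (Fin n) ℝ
  | 0, _ => 1
  | j + 1, k => if j + 1 ≤ k then 1 else A j * Phi A j k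

/-- The block lower triangular matrix `F_{0:N}` of the system on `[0,N]`, with
`(j,k)` block `C_j Φ_{j,k+1} B_k` for `j > k`, `D_k` for `j = k`, and `0` otherwise. -/
noncomputable def Fsys {n m r : ℕ} (N : ℕ)
    (A : ℕ → Matrix (Fin n) (Fin n) ℝ) (B : ℕ → Matrix (Fin n) (Fin m) ℝ)
    (C : ℕ → Matrix (Fin r) (Fin n) ℝ) (D : ℕ → Matrix (Fin r) (Fin m) ℝ) :
    Matrix (Fin (N + 1) × Fin r) (Fin (N + 1) × Fin m) ℝ :=
  Matrix.of fun jp ki =>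
    if (ki.1 : ℕ) < (jp.1 : ℕ) then (C jp.1 * Phi A jp.1 (ki.1 + 1) * B ki.1) jp.2 ki.2
    else if (jp.1 : ℕ) = (ki.1 : ℕ) then D ki.1 jp.2 ki.2
    else 0

/-- `S_k = I_r − C_k R C_kᵀ − q D_k D_kᵀ`. -/
noncomputable def Smat {n m r : ℕ}
    (C : ℕ → Matrix (Fin r) (Fin n) ℝ) (D : ℕ → Matrix (Fin r) (Fin m) ℝ)
    (q : ℝ) (R : Matrix (Fin n) (Fin n) ℝ) (k : ℕ) : Matrix (Fin r) (Fin r) ℝ :=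
  1 - C k * R * (C k)ᵀ - q • (D k * (D k)ᵀ)

/-- `M_k = −(A_k R C_kᵀ + q B_k D_kᵀ) S_k⁻¹`. -/
noncomputable def Mmat {n m r : ℕ}
    (A : ℕ → Matrix (Fin n) (Fin n) ℝ) (B : ℕ → Matrix (Fin n) (Fin m) ℝ)
    (C : ℕ → Matrix (Fin r) (Fin n) ℝ) (D : ℕ → Matrix (Fin r) (Fin m) ℝ)
    (q : ℝ) (R : Matrix (Fin n) (Fin n) ℝ) (k : ℕ) : Matrix (Fin n) (Fin r) ℝ :=
  -(A k * R * (C k)ᵀ + q • (B k * (D k)ᵀ)) * (Smat C D q R k)⁻¹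

/-- The Riccati recursion `R₀ = 0`,
`R_{k+1} = A_k R_k A_kᵀ + q B_k B_kᵀ + M_k S_k M_kᵀ`. -/
noncomputable def Rmat {n m r : ℕ}
    (A : ℕ → Matrix (Fin n) (Fin n) ℝ) (B : ℕ → Matrix (Fin n) (Fin m) ℝ)
    (C : ℕ → Matrix (Fin r) (Fin n) ℝ) (D : ℕ → Matrix (Fin r) (Fin m) ℝ)
    (q : ℝ) : ℕ → Matrix (Fin n) (Fin n) ℝ
  | 0 => 0
  | k + 1 =>
    A k * Rmat A B C D q k * (A k)ᵀ + q • (B k * (B k)ᵀ) +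
      Mmat A B C D q (Rmat A B C D q k) k * Smat C D q (Rmat A B C D q k) k *
        (Mmat A B C D q (Rmat A B C D q k) k)ᵀ

/-- The matrix `S_k` along the Riccati recursion. -/
noncomputable def RicS {n m r : ℕ}
    (A : ℕ → Matrix (Fin n) (Fin n) ℝ) (B : ℕ → Matrix (Fin n) (Fin m) ℝ)
    (C : ℕ → Matrix (Fin r) (Fin n) ℝ) (D : ℕ → Matrix (Fin r) (Fin m) ℝ)
    (q : ℝ) (k : ℕ) : Matrix (Fin r) (Fin r) ℝ :=
  Smat C D q (Rmat A B C D q k) k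

/-- The largest singular value of a matrix: the supremum of `‖F w‖` over unit vectors. -/
noncomputable def sigmaMax {κ ι : Type*} [Fintype κ] [Fintype ι]
    (F : Matrix κ ι ℝ) : ℝ :=
  sSup {x : ℝ | ∃ w : ι → ℝ, (∑ i, (w i)^2) = 1 ∧ x = Real.sqrt (∑ j, (F.mulVec w j)^2)}

/-!
Let `L` be the input-output matrix of the system `(A, M, C, I)`, unit block lower triangular,
and `S = diag(S₀, …, S_N)`. Unrolling the recursion writes `R_l` as the Gramian
`∑_{s<l} Φ_{l,s+1} (q B_s B_sᵀ + M_s S_s M_sᵀ) Φ_{l,s+1}ᵀ`, and with it the `(j, l)` block of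
`I - q F Fᵀ = L S Lᵀ` becomes the defining identities of `S_l` and `M_l`; it needs `S_l` invertible
only when `j ≠ l`. As `q σ_max(F)² < 1`, `I - q F Fᵀ` is positive definite. If `S₀, …, S_{k-1}`
are invertible, the factorization holds on all blocks `(j, l)` with `j, l ≤ k`, so evaluating both
quadratic forms at `w = L⁻ᵀ (e_k ⊗ x)`, which lives on those blocks, gives `xᵀ S_k x > 0`; this is
the induction. Finally `det (I - q Fᵀ F) = det (I - q F Fᵀ) = det S`.
-/

namespace Riccati

section General

variable {ι R : Type*} [Fintype ι]

lemma dotProduct_mulVec_eq_of_apply_eq [NonUnitalNonAssocSemiring R] {M M' : Matrix ι ι R}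
    {w : ι → R} (h : ∀ i j, w i ≠ 0 → w j ≠ 0 → M i j = M' i j) :
    w ⬝ᵥ M *ᵥ w = w ⬝ᵥ M' *ᵥ w := by
  simp only [dotProduct, Matrix.mulVec]
  refine Finset.sum_congr rfl fun i _ => ?_
  by_cases hi : w i = 0
  · simp [hi]
  refine congrArg _ (Finset.sum_congr rfl fun j _ => ?_)
  by_cases hj : w j = 0
  · simp [hj]
  rw [h i j hi hj]

lemma inv_mulVec_eq_zero_of_blockTriangular [DecidableEq ι] [CommRing R] {α : Type*}
    [LinearOrder α] {M : Matrix ι ι R} {b : ι → α} (hM : M.BlockTriangular b) {v : ι → R}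
    {K : α} (hv : ∀ j, K < b j → v j = 0) {i : ι} (hi : K < b i) : (M⁻¹ *ᵥ v) i = 0 := by
  by_cases hdet : IsUnit M.det
  · have := M.invertibleOfIsUnitDet hdet
    refine Finset.sum_eq_zero fun j _ => ?_
    by_cases hj : K < b j
    · rw [hv j hj, mul_zero]
    · exact mul_eq_zero_of_left
        (Matrix.blockTriangular_inv_of_blockTriangular hM ((not_lt.mp hj).trans_lt hi)) _
  · rw [Matrix.nonsing_inv_apply_not_isUnit _ hdet, Matrix.zero_mulVec, Pi.zero_apply]

end General

variable {n m r : ℕ}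

section Transition

variable (A : ℕ → Matrix (Fin n) (Fin n) ℝ)

lemma phi_self (k : ℕ) : Phi A k k = 1 := by
  cases k with
  | zero => rfl
  | succ j => rw [Phi, if_pos le_rfl]

lemma phi_succ {j k : ℕ} (h : k ≤ j) : Phi A (j + 1) k = A j * Phi A j k := by
  rw [Phi, if_neg (by omega)]

lemma phi_mul_phi {l k j : ℕ} (hlk : l ≤ k) (hkj : k ≤ j) :
    Phi A j k * Phi A k l = Phi A j l := by
  induction j, hkj using Nat.le_induction with
  | base => rw [phi_self, Matrix.one_mul]
  | succ j hkj ih => rw [phi_succ A hkj, phi_succ A (hlk.trans hkj), Matrix.mul_assoc, ih]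

lemma eq_sum_of_lyapunov_recursion (Q R : ℕ → Matrix (Fin n) (Fin n) ℝ) (h0 : R 0 = 0)
    (hsucc : ∀ k, R (k + 1) = A k * R k * (A k)ᵀ + Q k) (k : ℕ) :
    R k = ∑ s ∈ Finset.range k, Phi A k (s + 1) * Q s * (Phi A k (s + 1))ᵀ := by
  induction k with
  | zero => simp [h0]
  | succ k ih =>
    rw [hsucc, ih, Finset.sum_range_succ, phi_self, Finset.mul_sum, Finset.sum_mul]
    simp only [Matrix.one_mul, Matrix.transpose_one, Matrix.mul_one]
    congr 1
    refine Finset.sum_congr rfl fun s hs => ?_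
    rw [phi_succ A (Finset.mem_range.mp hs), Matrix.transpose_mul]
    simp only [Matrix.mul_assoc]

noncomputable def gram {k : ℕ} (B : ℕ → Matrix (Fin n) (Fin k) ℝ)
    (W : ℕ → Matrix (Fin k) (Fin k) ℝ) (l : ℕ) : Matrix (Fin n) (Fin n) ℝ :=
  ∑ s ∈ Finset.range l, Phi A l (s + 1) * (B s * W s * (B s)ᵀ) * (Phi A l (s + 1))ᵀ

noncomputable def sysBlock {k : ℕ} (B : ℕ → Matrix (Fin n) (Fin k) ℝ)
    (C : ℕ → Matrix (Fin r) (Fin n) ℝ) (D : ℕ → Matrix (Fin r) (Fin k) ℝ) (j s : ℕ) :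
    Matrix (Fin r) (Fin k) ℝ :=
  if s < j then C j * Phi A j (s + 1) * B s else if j = s then D s else 0

variable {k : ℕ} (B : ℕ → Matrix (Fin n) (Fin k) ℝ) (C : ℕ → Matrix (Fin r) (Fin n) ℝ)
  (D : ℕ → Matrix (Fin r) (Fin k) ℝ)

lemma sysBlock_of_lt {j s : ℕ} (h : s < j) :
    sysBlock A B C D j s = C j * Phi A j (s + 1) * B s := if_pos h

lemma sysBlock_self (j : ℕ) : sysBlock A B C D j j = D j := by
  rw [sysBlock, if_neg (lt_irrefl j), if_pos rfl]

lemma sysBlock_of_gt {j s : ℕ} (h : j < s) : sysBlock A B C D j s = 0 := by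
  rw [sysBlock, if_neg (by omega), if_neg (by omega)]

lemma sum_mul_sysBlock_transpose {N l k' : ℕ} (hl : l ≤ N) (f : ℕ → Matrix (Fin k') (Fin k) ℝ) :
    ∑ s ∈ Finset.range (N + 1), f s * (sysBlock A B C D l s)ᵀ =
      ∑ s ∈ Finset.range l, f s * (sysBlock A B C D l s)ᵀ + f l * (D l)ᵀ := by
  rw [← sysBlock_self A B C D l, ← Finset.sum_range_succ]
  refine (Finset.sum_subset (Finset.range_subset_range.mpr (by omega)) fun s _ hs => ?_).symm
  rw [sysBlock_of_gt A B C D (by simpa using hs), Matrix.transpose_zero, Matrix.mul_zero]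

lemma sum_sysBlock_mul_mul_sysBlock_transpose (W : ℕ → Matrix (Fin k) (Fin k) ℝ) {l j : ℕ}
    (hlj : l ≤ j) :
    ∑ s ∈ Finset.range l, sysBlock A B C D j s * W s * (sysBlock A B C D l s)ᵀ =
      C j * Phi A j l * gram A B W l * (C l)ᵀ := by
  rw [gram, Matrix.mul_sum, Matrix.sum_mul]
  refine Finset.sum_congr rfl fun s hs => ?_
  have hsl : s < l := Finset.mem_range.mp hs
  rw [sysBlock_of_lt A B C D (hsl.trans_le hlj), sysBlock_of_lt A B C D hsl,
    ← phi_mul_phi A hsl hlj]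
  simp only [Matrix.transpose_mul, Matrix.mul_assoc]

end Transition

section Blocks

variable (N : ℕ)

def blk {a b : ℕ} (f : ℕ → ℕ → Matrix (Fin a) (Fin b) ℝ) :
    Matrix (Fin (N + 1) × Fin a) (Fin (N + 1) × Fin b) ℝ :=
  Matrix.of fun i j => f i.1 j.1 i.2 j.2

def blkDiag {a : ℕ} (W : ℕ → Matrix (Fin a) (Fin a) ℝ) :
    Matrix (Fin (N + 1) × Fin a) (Fin (N + 1) × Fin a) ℝ :=
  blk N fun j l => if j = l then W j else 0

lemma one_eq_blk {a : ℕ} :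
    (1 : Matrix (Fin (N + 1) × Fin a) (Fin (N + 1) × Fin a) ℝ) =
      blk N fun j l => if j = l then 1 else 0 := by
  ext ⟨j, p⟩ ⟨l, t⟩
  by_cases h : j = l
  · subst h
    simp [blk, Matrix.one_apply]
  · simp [blk, h, Fin.val_inj]

lemma blk_mul_blk_transpose {a b c : ℕ} (f : ℕ → ℕ → Matrix (Fin a) (Fin c) ℝ)
    (g : ℕ → ℕ → Matrix (Fin b) (Fin c) ℝ) :
    blk N f * (blk N g)ᵀ = blk N fun j l => ∑ s ∈ Finset.range (N + 1), f j s * (g l s)ᵀ := by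
  ext ⟨j, p⟩ ⟨l, t⟩
  simp only [blk, Matrix.mul_apply, Matrix.transpose_apply, Matrix.of_apply,
    Fintype.sum_prod_type, Matrix.sum_apply]
  exact Fin.sum_univ_eq_sum_range (fun s => ∑ u, f j s p u * g l s t u) (N + 1)

lemma blk_mul_blkDiag {a b : ℕ} (f : ℕ → ℕ → Matrix (Fin a) (Fin b) ℝ)
    (W : ℕ → Matrix (Fin b) (Fin b) ℝ) :
    blk N f * blkDiag N W = blk N fun j l => f j l * W l := by
  ext ⟨j, p⟩ ⟨l, t⟩
  simp [blk, blkDiag, Matrix.mul_apply, Fintype.sum_prod_type, Fin.val_inj, Matrix.ite_apply]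

lemma blockTriangular_blk_transpose {a : ℕ} {f : ℕ → ℕ → Matrix (Fin a) (Fin a) ℝ}
    (hf : ∀ j l, j < l → f j l = 0) : (blk N f)ᵀ.BlockTriangular Prod.fst :=
  fun i j h => by simp [blk, hf _ _ (Fin.lt_def.mp h)]

lemma det_blk {a : ℕ} {f : ℕ → ℕ → Matrix (Fin a) (Fin a) ℝ}
    (hf : ∀ j l, j < l → f j l = 0) :
    (blk N f).det = ∏ v : Fin (N + 1), (f v v).det := by
  rw [← Matrix.det_transpose, (blockTriangular_blk_transpose N hf).det_fintype]
  refine Finset.prod_congr rfl fun v _ => ?_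
  let e : {i : Fin (N + 1) × Fin a // i.1 = v} ≃ Fin a :=
    { toFun := fun i => i.1.2
      invFun := fun p => ⟨(v, p), rfl⟩
      left_inv := by rintro ⟨⟨_, _⟩, rfl⟩; rfl
      right_inv := fun _ => rfl }
  have : (blk N f)ᵀ.toSquareBlock Prod.fst v = (f v v)ᵀ.submatrix e e := by
    ext ⟨⟨_, _⟩, rfl⟩ ⟨⟨_, _⟩, h⟩
    cases h
    rfl
  rw [this, Matrix.det_submatrix_equiv_self, Matrix.det_transpose]

lemma det_blkDiag {a : ℕ} (W : ℕ → Matrix (Fin a) (Fin a) ℝ) :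
    (blkDiag N W).det = ∏ v : Fin (N + 1), (W v).det := by
  rw [blkDiag, det_blk N fun j l h => if_neg h.ne]
  simp

lemma dotProduct_blkDiag_mulVec_single {a : ℕ} (W : ℕ → Matrix (Fin a) (Fin a) ℝ)
    (k : Fin (N + 1)) (x : Fin a → ℝ) :
    let v : Fin (N + 1) × Fin a → ℝ := fun i => if i.1 = k then x i.2 else 0
    v ⬝ᵥ blkDiag N W *ᵥ v = x ⬝ᵥ W k *ᵥ x := by
  simp [dotProduct, Matrix.mulVec, blk, blkDiag, Fintype.sum_prod_type, ite_mul,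
    Fin.val_inj, Finset.sum_ite_eq']

end Blocks

section Recursion

variable (A : ℕ → Matrix (Fin n) (Fin n) ℝ) (B : ℕ → Matrix (Fin n) (Fin m) ℝ)
  (C : ℕ → Matrix (Fin r) (Fin n) ℝ) (D : ℕ → Matrix (Fin r) (Fin m) ℝ) (q : ℝ)

noncomputable def gain (k : ℕ) : Matrix (Fin n) (Fin r) ℝ :=
  Mmat A B C D q (Rmat A B C D q k) k

lemma smat_transpose {R : Matrix (Fin n) (Fin n) ℝ} (hR : Rᵀ = R) (k : ℕ) :
    (Smat C D q R k)ᵀ = Smat C D q R k := by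
  simp [Smat, Matrix.transpose_sub, Matrix.transpose_mul, Matrix.mul_assoc, hR]

lemma rmat_transpose (k : ℕ) : (Rmat A B C D q k)ᵀ = Rmat A B C D q k := by
  induction k with
  | zero => simp [Rmat]
  | succ k ih =>
    simp [Rmat, Mmat, Matrix.transpose_mul, Matrix.mul_assoc, ih, smat_transpose C D q ih,
      Matrix.transpose_nonsing_inv]

lemma ricS_transpose (k : ℕ) : (RicS A B C D q k)ᵀ = RicS A B C D q k :=
  smat_transpose C D q (rmat_transpose A B C D q k) k

lemma ricS_isHermitian (k : ℕ) : (RicS A B C D q k).IsHermitian :=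
  (Matrix.conjTranspose_eq_transpose_of_trivial _).trans (ricS_transpose A B C D q k)

lemma rmat_eq_gram (l : ℕ) :
    Rmat A B C D q l = q • gram A B 1 l + gram A (gain A B C D q) (RicS A B C D q) l := by
  rw [eq_sum_of_lyapunov_recursion A
    (fun s => q • (B s * (B s)ᵀ) + gain A B C D q s * RicS A B C D q s * (gain A B C D q s)ᵀ)
    (Rmat A B C D q) rfl (fun k => by rw [Rmat, add_assoc]; rfl)]
  simp only [gram, Finset.smul_sum, ← Finset.sum_add_distrib, Matrix.mul_add, Matrix.add_mul,
    Matrix.mul_smul, Matrix.smul_mul, Pi.one_apply, Matrix.mul_one]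

lemma gain_mul_ricS {k : ℕ} (h : IsUnit (RicS A B C D q k).det) :
    gain A B C D q k * RicS A B C D q k =
      -(A k * Rmat A B C D q k * (C k)ᵀ + q • (B k * (D k)ᵀ)) := by
  rw [gain, Mmat, RicS, Matrix.mul_assoc, Matrix.nonsing_inv_mul _ (by exact h),
    Matrix.mul_one]

lemma ldl_block_of_le {N l j : ℕ} (hlj : l ≤ j) (hj : j ≤ N)
    (hS : j = l ∨ IsUnit (RicS A B C D q l).det) :
    (if j = l then 1 else 0) -
        q • ∑ s ∈ Finset.range (N + 1), sysBlock A B C D j s * (sysBlock A B C D l s)ᵀ =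
      ∑ s ∈ Finset.range (N + 1), sysBlock A (gain A B C D q) C 1 j s * RicS A B C D q s *
        (sysBlock A (gain A B C D q) C 1 l s)ᵀ := by
  have hF := sum_sysBlock_mul_mul_sysBlock_transpose A B C D 1 hlj
  simp only [Pi.one_apply, Matrix.mul_one] at hF
  rw [sum_mul_sysBlock_transpose A B C D (hlj.trans hj), hF,
    sum_mul_sysBlock_transpose A _ C 1 (hlj.trans hj),
    sum_sysBlock_mul_mul_sysBlock_transpose A _ C 1 _ hlj]
  rcases hlj.eq_or_lt with rfl | hlt
  · rw [if_pos rfl, sysBlock_self, sysBlock_self, phi_self, RicS, Smat, rmat_eq_gram]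
    simp only [Pi.one_apply, Matrix.transpose_one, Matrix.one_mul, Matrix.mul_one,
      Matrix.mul_add, Matrix.add_mul, Matrix.mul_smul, Matrix.smul_mul, smul_add]
    abel
  · have hphi : Phi A j l = Phi A j (l + 1) * A l := by
      rw [← phi_mul_phi A l.le_succ hlt, phi_succ A le_rfl, phi_self, Matrix.mul_one]
    rw [if_neg hlt.ne', sysBlock_of_lt A B C D hlt, sysBlock_of_lt A _ C 1 hlt,
      Matrix.mul_assoc (C j * Phi A j (l + 1)) (gain A B C D q l),
      gain_mul_ricS A B C D q (hS.resolve_left hlt.ne'), hphi, rmat_eq_gram]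
    simp only [Pi.one_apply, Matrix.transpose_one, Matrix.mul_one, Matrix.mul_add,
      Matrix.add_mul, Matrix.mul_smul, Matrix.smul_mul, smul_add, Matrix.mul_neg,
      Matrix.mul_assoc]
    abel

end Recursion

section Factorization

variable (N : ℕ) (A : ℕ → Matrix (Fin n) (Fin n) ℝ) (B : ℕ → Matrix (Fin n) (Fin m) ℝ)
  (C : ℕ → Matrix (Fin r) (Fin n) ℝ) (D : ℕ → Matrix (Fin r) (Fin m) ℝ) (q : ℝ)

noncomputable def lowerFactor : Matrix (Fin (N + 1) × Fin r) (Fin (N + 1) × Fin r) ℝ :=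
  blk N (sysBlock A (gain A B C D q) C 1)

lemma fsys_eq_blk : Fsys N A B C D = blk N (sysBlock A B C D) := by
  ext ⟨j, p⟩ ⟨l, t⟩
  simp only [Fsys, blk, sysBlock, Matrix.of_apply]
  split_ifs <;> simp

lemma one_sub_smul_fsys_mul_transpose_eq_blk :
    1 - q • (Fsys N A B C D * (Fsys N A B C D)ᵀ) = blk N fun j l =>
      (if j = l then 1 else 0) -
        q • ∑ s ∈ Finset.range (N + 1), sysBlock A B C D j s * (sysBlock A B C D l s)ᵀ := by
  rw [fsys_eq_blk, blk_mul_blk_transpose, one_eq_blk]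
  rfl

lemma lowerFactor_mul_blkDiag_mul_transpose_eq_blk :
    lowerFactor N A B C D q * blkDiag N (RicS A B C D q) * (lowerFactor N A B C D q)ᵀ =
      blk N fun j l => ∑ s ∈ Finset.range (N + 1), sysBlock A (gain A B C D q) C 1 j s *
        RicS A B C D q s * (sysBlock A (gain A B C D q) C 1 l s)ᵀ := by
  rw [lowerFactor, blk_mul_blkDiag, blk_mul_blk_transpose]

lemma ldl_block {j l : ℕ} (hj : j ≤ N) (hl : l ≤ N)
    (hS : j = l ∨ IsUnit (RicS A B C D q (min j l)).det) :
    (if j = l then 1 else 0) -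
        q • ∑ s ∈ Finset.range (N + 1), sysBlock A B C D j s * (sysBlock A B C D l s)ᵀ =
      ∑ s ∈ Finset.range (N + 1), sysBlock A (gain A B C D q) C 1 j s * RicS A B C D q s *
        (sysBlock A (gain A B C D q) C 1 l s)ᵀ := by
  rcases le_total l j with h | h
  · exact ldl_block_of_le A B C D q h hj (by rwa [min_eq_right h] at hS)
  · have := congrArg Matrix.transpose
      (ldl_block_of_le A B C D q h hl (by rwa [min_eq_left h, eq_comm] at hS))
    simp only [Matrix.transpose_sub, Matrix.transpose_smul, Matrix.transpose_sum,
      Matrix.transpose_mul, Matrix.transpose_transpose, ricS_transpose, Matrix.mul_assoc,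
      apply_ite Matrix.transpose, Matrix.transpose_one, Matrix.transpose_zero] at this
    simpa only [eq_comm (a := l), Matrix.mul_assoc] using this

lemma one_sub_smul_fsys_mul_transpose_apply {i i' : Fin (N + 1) × Fin r}
    (hS : (i.1 : ℕ) = i'.1 ∨ IsUnit (RicS A B C D q (min i.1 i'.1)).det) :
    (1 - q • (Fsys N A B C D * (Fsys N A B C D)ᵀ) :
      Matrix (Fin (N + 1) × Fin r) (Fin (N + 1) × Fin r) ℝ) i i' =
      (lowerFactor N A B C D q * blkDiag N (RicS A B C D q) *
        (lowerFactor N A B C D q)ᵀ) i i' := by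
  rw [one_sub_smul_fsys_mul_transpose_eq_blk, lowerFactor_mul_blkDiag_mul_transpose_eq_blk]
  exact congrFun (congrFun (ldl_block N A B C D q (by omega) (by omega) hS) i.2) i'.2

end Factorization

section SingularValue

variable {κ ι : Type*} [Fintype κ] [Fintype ι] (F : Matrix κ ι ℝ)

lemma sum_sq_pos {w : ι → ℝ} (hw : w ≠ 0) : 0 < ∑ i, w i ^ 2 := by
  obtain ⟨i, hi⟩ := Function.ne_iff.mp hw
  exact Finset.sum_pos' (fun j _ => sq_nonneg (w j))
    ⟨i, Finset.mem_univ i, pow_two_pos_of_ne_zero hi⟩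

lemma bddAbove_sigmaMax_set :
    BddAbove {x : ℝ | ∃ w : ι → ℝ, ∑ i, w i ^ 2 = 1 ∧ x = √(∑ j, (F *ᵥ w) j ^ 2)} := by
  refine ⟨√(∑ j, ∑ i, F j i ^ 2), ?_⟩
  rintro x ⟨w, hw, rfl⟩
  refine Real.sqrt_le_sqrt (Finset.sum_le_sum fun j _ => ?_)
  calc (F *ᵥ w) j ^ 2 = (∑ i, F j i * w i) ^ 2 := rfl
    _ ≤ (∑ i, F j i ^ 2) * ∑ i, w i ^ 2 := Finset.sum_mul_sq_le_sq_mul_sq _ _ _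
    _ = ∑ i, F j i ^ 2 := by rw [hw, mul_one]

lemma sum_sq_mulVec_le (w : ι → ℝ) :
    ∑ j, (F *ᵥ w) j ^ 2 ≤ sigmaMax F ^ 2 * ∑ i, w i ^ 2 := by
  rcases eq_or_ne w 0 with rfl | hw
  · simp
  have hc := sum_sq_pos hw
  set u := (√(∑ i, w i ^ 2))⁻¹ • w
  have hu : ∑ i, u i ^ 2 = 1 := by
    simp only [u, Pi.smul_apply, smul_eq_mul, mul_pow, ← Finset.mul_sum, inv_pow,
      Real.sq_sqrt hc.le, inv_mul_cancel₀ hc.ne']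
  have hFu : ∑ j, (F *ᵥ u) j ^ 2 = (∑ i, w i ^ 2)⁻¹ * ∑ j, (F *ᵥ w) j ^ 2 := by
    simp only [u, Matrix.mulVec_smul, Pi.smul_apply, smul_eq_mul, mul_pow, ← Finset.mul_sum,
      inv_pow, Real.sq_sqrt hc.le]
  have hle : ∑ j, (F *ᵥ u) j ^ 2 ≤ sigmaMax F ^ 2 :=
    (Real.sqrt_le_iff.mp (le_csSup (bddAbove_sigmaMax_set F) ⟨u, hu, rfl⟩)).2
  rw [hFu, inv_mul_le_iff₀ hc] at hle
  linarith

/-- `‖Fᵀ x‖² = ⟪x, F Fᵀ x⟫ ≤ ‖x‖ σ ‖Fᵀ x‖` by Cauchy–Schwarz. -/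
lemma sum_sq_transpose_mulVec_le (x : κ → ℝ) :
    ∑ i, (Fᵀ *ᵥ x) i ^ 2 ≤ sigmaMax F ^ 2 * ∑ j, x j ^ 2 := by
  set y := Fᵀ *ᵥ x
  have hy : ∑ i, y i ^ 2 = ∑ j, x j * (F *ᵥ y) j := by
    have : y ⬝ᵥ y = x ⬝ᵥ F *ᵥ y := by
      rw [Matrix.dotProduct_mulVec x F y, ← Matrix.mulVec_transpose]
    simpa [dotProduct, sq] using this
  have key : (∑ i, y i ^ 2) ^ 2 ≤ (∑ j, x j ^ 2) * (sigmaMax F ^ 2 * ∑ i, y i ^ 2) :=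
    calc (∑ i, y i ^ 2) ^ 2 = (∑ j, x j * (F *ᵥ y) j) ^ 2 := by rw [hy]
      _ ≤ (∑ j, x j ^ 2) * ∑ j, (F *ᵥ y) j ^ 2 := Finset.sum_mul_sq_le_sq_mul_sq _ _ _
      _ ≤ (∑ j, x j ^ 2) * (sigmaMax F ^ 2 * ∑ i, y i ^ 2) :=
        mul_le_mul_of_nonneg_left (sum_sq_mulVec_le F y) (by positivity)
  rcases eq_or_ne y 0 with hy0 | hy0
  · simp only [hy0, Pi.zero_apply, zero_pow two_ne_zero, Finset.sum_const_zero]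
    positivity
  have := sum_sq_pos hy0
  nlinarith

lemma posDef_one_sub_smul_mul_transpose_of_lt_inv [DecidableEq κ] {q : ℝ}
    (hq : q < (sigmaMax F ^ 2)⁻¹) : (1 - q • (F * Fᵀ)).PosDef := by
  refine .of_dotProduct_mulVec_pos ?_ fun x hx => ?_
  · simp [Matrix.IsHermitian, Matrix.conjTranspose_eq_transpose_of_trivial,
      Matrix.transpose_sub, Matrix.transpose_mul]
  rw [star_trivial]
  have hquad : x ⬝ᵥ (1 - q • (F * Fᵀ)) *ᵥ x = ∑ j, x j ^ 2 - q * ∑ i, (Fᵀ *ᵥ x) i ^ 2 := by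
    rw [Matrix.sub_mulVec, Matrix.one_mulVec, Matrix.smul_mulVec, ← Matrix.mulVec_mulVec,
      dotProduct_sub, dotProduct_smul, Matrix.dotProduct_mulVec, ← Matrix.mulVec_transpose]
    simp [dotProduct, sq]
  have hqσ : q * sigmaMax F ^ 2 < 1 := by
    rcases (sq_nonneg (sigmaMax F)).eq_or_lt with h0 | h0
    · rw [← h0, mul_zero]
      exact one_pos
    · exact (lt_inv_mul_iff₀' h0).mp (by rwa [mul_one])
  have hx2 := sum_sq_pos hx
  have hbound := sum_sq_transpose_mulVec_le F x
  rw [hquad, sub_pos]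
  rcases le_or_gt q 0 with hq0 | hq0
  · nlinarith [Finset.sum_nonneg fun i (_ : i ∈ Finset.univ) => sq_nonneg ((Fᵀ *ᵥ x) i)]
  · nlinarith

end SingularValue

section PosDef

variable {N : ℕ} (A : ℕ → Matrix (Fin n) (Fin n) ℝ) (B : ℕ → Matrix (Fin n) (Fin m) ℝ)
  (C : ℕ → Matrix (Fin r) (Fin n) ℝ) (D : ℕ → Matrix (Fin r) (Fin m) ℝ) (q : ℝ)

lemma blockTriangular_lowerFactor_transpose :
    (lowerFactor N A B C D q)ᵀ.BlockTriangular Prod.fst :=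
  blockTriangular_blk_transpose N fun _ _ h => sysBlock_of_gt A _ C 1 h

lemma det_lowerFactor : (lowerFactor N A B C D q).det = 1 := by
  rw [lowerFactor, det_blk N fun _ _ h => sysBlock_of_gt A _ C 1 h]
  simp [sysBlock_self]

lemma one_sub_smul_fsys_mul_transpose_eq_lowerFactor
    (hS : ∀ k ≤ N, IsUnit (RicS A B C D q k).det) :
    1 - q • (Fsys N A B C D * (Fsys N A B C D)ᵀ) =
      lowerFactor N A B C D q * blkDiag N (RicS A B C D q) * (lowerFactor N A B C D q)ᵀ :=
  Matrix.ext fun i _ => one_sub_smul_fsys_mul_transpose_apply N A B C D q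
    (Or.inr (hS _ ((min_le_left _ _).trans (Nat.le_of_lt_succ i.1.isLt))))

lemma dotProduct_one_sub_smul_fsys_mul_transpose_mulVec_of_support {K : ℕ}
    (hS : ∀ s < K, IsUnit (RicS A B C D q s).det) {w : Fin (N + 1) × Fin r → ℝ}
    (hw : ∀ i, K < (i.1 : ℕ) → w i = 0) :
    w ⬝ᵥ (1 - q • (Fsys N A B C D * (Fsys N A B C D)ᵀ)) *ᵥ w =
      w ⬝ᵥ (lowerFactor N A B C D q * blkDiag N (RicS A B C D q) *
        (lowerFactor N A B C D q)ᵀ) *ᵥ w := by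
  refine dotProduct_mulVec_eq_of_apply_eq fun i i' hi hi' => ?_
  have hik := mt (hw i) hi
  have hi'k := mt (hw i') hi'
  refine one_sub_smul_fsys_mul_transpose_apply N A B C D q ?_
  by_cases h : (i.1 : ℕ) = i'.1
  · exact Or.inl h
  · exact Or.inr (hS _ (by omega))

lemma ricS_posDef (hT : (1 - q • (Fsys N A B C D * (Fsys N A B C D)ᵀ)).PosDef) :
    ∀ k ≤ N, (RicS A B C D q k).PosDef := by
  intro k
  induction k using Nat.strong_induction_on with
  | _ k ih =>
  intro hk
  have hS : ∀ s < k, IsUnit (RicS A B C D q s).det := fun s hs =>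
    (Matrix.isUnit_iff_isUnit_det _).mp (ih s hs (by omega)).isUnit
  refine .of_dotProduct_mulVec_pos (ricS_isHermitian A B C D q k) fun x hx => ?_
  rw [star_trivial]
  set L := lowerFactor N A B C D q
  set k' : Fin (N + 1) := ⟨k, Nat.lt_succ_of_le hk⟩
  set v : Fin (N + 1) × Fin r → ℝ := fun i => if i.1 = k' then x i.2 else 0
  -- `w` solves `Lᵀ w = v`; as `Lᵀ` is block upper triangular, `w` vanishes on blocks beyond `k`
  set w := (Lᵀ)⁻¹ *ᵥ v
  have hLw : Lᵀ *ᵥ w = v := by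
    rw [Matrix.mulVec_mulVec, Matrix.mul_nonsing_inv _ (by simp [L, det_lowerFactor]),
      Matrix.one_mulVec]
  have hw : ∀ i, k < (i.1 : ℕ) → w i = 0 := fun i hi =>
    inv_mulVec_eq_zero_of_blockTriangular (blockTriangular_lowerFactor_transpose A B C D q)
      (K := k') (fun j hj => if_neg (ne_of_gt hj)) (Fin.lt_def.mpr hi)
  have hw0 : w ≠ 0 := by
    intro h0
    obtain ⟨p, hp⟩ := Function.ne_iff.mp hx
    have := congrFun hLw (k', p)
    simp only [h0, Matrix.mulVec_zero, Pi.zero_apply, v, ↓reduceIte] at this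
    exact hp this.symm
  calc 0 < w ⬝ᵥ (1 - q • (Fsys N A B C D * (Fsys N A B C D)ᵀ)) *ᵥ w := by
        simpa [star_trivial] using hT.dotProduct_mulVec_pos hw0
    _ = w ⬝ᵥ (L * blkDiag N (RicS A B C D q) * Lᵀ) *ᵥ w :=
        dotProduct_one_sub_smul_fsys_mul_transpose_mulVec_of_support A B C D q hS hw
    _ = v ⬝ᵥ blkDiag N (RicS A B C D q) *ᵥ v := by
        rw [← hLw, ← Matrix.mulVec_mulVec, ← Matrix.mulVec_mulVec, Matrix.dotProduct_mulVec,
          ← Matrix.mulVec_transpose]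
    _ = x ⬝ᵥ RicS A B C D q k *ᵥ x := dotProduct_blkDiag_mulVec_single N _ k' x

end PosDef

end Riccati

open Riccati

theorem riccati_det_factorization_general
    (n m r N : ℕ) (A : ℕ → Matrix (Fin n) (Fin n) ℝ) (B : ℕ → Matrix (Fin n) (Fin m) ℝ)
    (C : ℕ → Matrix (Fin r) (Fin n) ℝ) (D : ℕ → Matrix (Fin r) (Fin m) ℝ)
    (q : ℝ) (hq' : q < (sigmaMax (Fsys N A B C D) ^ 2)⁻¹) :
    (∀ k ≤ N, (RicS A B C D q k).PosDef) ∧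
      (1 - q • ((Fsys N A B C D)ᵀ * Fsys N A B C D)).det =
        ∏ k ∈ Finset.range (N + 1), (RicS A B C D q k).det := by
  have hPD := ricS_posDef A B C D q (posDef_one_sub_smul_mul_transpose_of_lt_inv _ hq')
  refine ⟨hPD, ?_⟩
  have hS : ∀ k ≤ N, IsUnit (RicS A B C D q k).det := fun k hk =>
    (Matrix.isUnit_iff_isUnit_det _).mp (hPD k hk).isUnit
  rw [← Matrix.mul_smul, Matrix.det_one_sub_mul_comm, Matrix.smul_mul,
    one_sub_smul_fsys_mul_transpose_eq_lowerFactor A B C D q hS, Matrix.det_mul, Matrix.det_mul,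
    Matrix.det_transpose, det_lowerFactor, det_blkDiag, one_mul, mul_one]
  exact Fin.prod_univ_eq_prod_range (fun k => (RicS A B C D q k).det) (N + 1)

/-- For `0 ≤ q < σ_max(F_{0:N})^{−2}`, the matrices `S₀,…,S_N` of the Riccati
recursion are all positive definite and
`det(I − q F_{0:N}ᵀ F_{0:N}) = ∏_{k=0}^N det S_k`. -/
theorem riccati_det_factorization
    (n m r N : ℕ) (hn : 0 < n) (hm : 0 < m) (hr : 0 < r)
    (A : ℕ → Matrix (Fin n) (Fin n) ℝ) (B : ℕ → Matrix (Fin n) (Fin m) ℝ)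
    (C : ℕ → Matrix (Fin r) (Fin n) ℝ) (D : ℕ → Matrix (Fin r) (Fin m) ℝ)
    (q : ℝ) (hq : 0 ≤ q) (hq' : q < (sigmaMax (Fsys N A B C D) ^ 2)⁻¹) :
    (∀ k ≤ N, (RicS A B C D q k).PosDef) ∧
      (1 - q • ((Fsys N A B C D)ᵀ * Fsys N A B C D)).det =
        ∏ k ∈ Finset.range (N + 1), (RicS A B C D q k).det :=
  riccati_det_factorization_general n m r N A B C D q hq'
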